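/- Let Q be as in the context and let a < b be real numbers with φ(a,b) ≥ 0. Define p(x) = (1/(2π)) · ∫_a^b D(x,t) · √((t−a)/(b−t)) dt + (1/2)·Q'(x). Then p(x) ≥ 0 for every real x ≥ a. -/

import Mathlib

open MeasureTheory intervalIntegral

/-- `φ(a,b) = ∫₀¹ Q'((1−t)b + t·a)/√(t(1−t)) dt`. -/
noncomputable def phi (Q : Polynomial ℝ) (a b : ℝ) : ℝ :=
  ∫ t in (0:ℝ)..1, Q.derivative.eval ((1 - t) * b + t * a) / Real.sqrt (t * (1 - t))

/-- The divided difference `D(x,t) = (Q'(x) − Q'(t))/(x − t)` for `t ≠ x`, `D(x,x) = Q''(x)`. -/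
noncomputable def divDiff (Q : Polynomial ℝ) (x t : ℝ) : ℝ :=
  if x = t then Q.derivative.derivative.eval x
  else (Q.derivative.eval x - Q.derivative.eval t) / (x - t)

/-- `p(x) = (1/(2π)) ∫_a^b D(x,t)·√((t−a)/(b−t)) dt + (1/2)·Q'(x)`. -/
noncomputable def pFun (Q : Polynomial ℝ) (a b x : ℝ) : ℝ :=
  (1 / (2 * Real.pi)) * (∫ t in a..b, divDiff Q x t * Real.sqrt ((t - a) / (b - t)))
    + (1 / 2) * Q.derivative.eval x

/-!
Write `w(t) = √((t-a)(b-t))`. Then `√((t-a)/(b-t)) = (t-a)/w(t)` and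
`D(x,t)(t-a) = Q'(t) - Q'(x) + (x-a) D(x,t)`, so integrating against `1/w` gives
`2π p(x) = φ(a,b) + (x-a) ∫_a^b D(x,t)/w(t) dt`: indeed `∫_a^b Q'/w = φ(a,b)` by an affine change
of variables, and `∫_a^b 1/w = π` because `1/w` is the derivative of `arcsin ((2t-a-b)/(b-a))`.
Convexity of `Q` makes `D ≥ 0`, so both terms are nonnegative when `x ≥ a`.
-/

open Polynomial Real Set

section DividedDifference

variable (Q : ℝ[X]) (x : ℝ)

theorem divDiff_eq_eval_divByMonic (t : ℝ) :
    divDiff Q x t = (Q.derivative /ₘ (X - C x)).eval t := by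
  have hmul := congrArg (eval t) (X_sub_C_mul_divByMonic_eq_sub_modByMonic Q.derivative x)
  simp only [eval_mul, eval_sub, eval_X, eval_C, modByMonic_X_sub_C_eq_C_eval] at hmul
  rw [divDiff]
  split_ifs with h
  · subst h
    have hderiv := congrArg (eval x)
      (divByMonic_add_X_sub_C_mul_derivative_divByMonic_eq_derivative Q.derivative x)
    simpa using hderiv.symm
  · rw [div_eq_iff (sub_ne_zero.mpr h)]
    linear_combination hmul

theorem continuous_divDiff : Continuous (divDiff Q x) :=
  (Q.derivative /ₘ (X - C x)).continuous.congr fun t => (divDiff_eq_eval_divByMonic Q x t).symm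

theorem divDiff_mul_sub (t : ℝ) :
    divDiff Q x t * (t - x) = Q.derivative.eval t - Q.derivative.eval x := by
  rw [divDiff]
  split_ifs with h
  · simp [h]
  · field_simp [sub_ne_zero.mpr h, sub_ne_zero.mpr (Ne.symm h)]
    ring

variable {Q}

theorem divDiff_nonneg (hconv : ∀ y, 0 ≤ Q.derivative.derivative.eval y) (t : ℝ) :
    0 ≤ divDiff Q x t := by
  have hmono : Monotone (fun y => Q.derivative.eval y) :=
    monotone_of_deriv_nonneg Q.derivative.differentiable fun y => by
      simpa only [Polynomial.deriv] using hconv y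
  rw [divDiff]
  split_ifs with h
  · exact hconv x
  · rcases lt_or_gt_of_ne h with hlt | hlt
    · exact div_nonneg_of_nonpos (sub_nonpos.mpr (hmono hlt.le)) (sub_nonpos.mpr hlt.le)
    · exact div_nonneg (sub_nonneg.mpr (hmono hlt.le)) (sub_nonneg.mpr hlt.le)

end DividedDifference

section ArcsineWeight

variable {a b : ℝ}

theorem hasDerivAt_arcsin_affine {t : ℝ} (ht : t ∈ Ioo a b) :
    HasDerivAt (fun s => arcsin ((2 * s - a - b) / (b - a)))
      (√((t - a) * (b - t)))⁻¹ t := by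
  obtain ⟨hat, htb⟩ := ht
  have hba : 0 < b - a := by linarith
  have hlin : HasDerivAt (fun s => (2 * s - a - b) / (b - a)) (2 / (b - a)) t := by
    simpa using ((((hasDerivAt_id t).const_mul 2).sub_const a).sub_const b).div_const (b - a)
  have hne1 : (2 * t - a - b) / (b - a) ≠ -1 := by
    rw [Ne, div_eq_iff hba.ne']; linarith
  have hne2 : (2 * t - a - b) / (b - a) ≠ 1 := by
    rw [Ne, div_eq_iff hba.ne']; linarith
  refine ((hasDerivAt_arcsin hne1 hne2).comp t hlin).congr_deriv ?_
  have hsq : 1 - ((2 * t - a - b) / (b - a)) ^ 2 = (2 / (b - a)) ^ 2 * ((t - a) * (b - t)) := by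
    field_simp; ring
  have hpos : 0 < √((t - a) * (b - t)) := sqrt_pos.mpr (by nlinarith)
  rw [hsq, sqrt_mul (sq_nonneg _), sqrt_sq (by positivity)]
  field_simp

theorem intervalIntegrable_inv_sqrt_mul_sub (hab : a ≤ b) :
    IntervalIntegrable (fun t => (√((t - a) * (b - t)))⁻¹) volume a b := by
  rw [intervalIntegrable_iff_integrableOn_Ioc_of_le hab]
  exact integrableOn_deriv_of_nonneg (by fun_prop) (fun t ht => hasDerivAt_arcsin_affine ht)
    fun t _ => inv_nonneg.mpr (sqrt_nonneg _)

theorem intervalIntegrable_div_sqrt_mul_sub (hab : a ≤ b) {g : ℝ → ℝ}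
    (hg : ContinuousOn g (uIcc a b)) :
    IntervalIntegrable (fun t => g t / √((t - a) * (b - t))) volume a b := by
  simpa only [div_eq_mul_inv] using (intervalIntegrable_inv_sqrt_mul_sub hab).continuousOn_mul hg

theorem integral_inv_sqrt_mul_sub (hab : a < b) :
    ∫ t in a..b, (√((t - a) * (b - t)))⁻¹ = π := by
  rw [integral_eq_sub_of_hasDerivAt_of_le hab.le (by fun_prop)
    (fun t ht => hasDerivAt_arcsin_affine ht) (intervalIntegrable_inv_sqrt_mul_sub hab.le)]
  have hba : b - a ≠ 0 := by linarith
  have hb : (2 * b - a - b) / (b - a) = 1 := by field_simp; ring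
  have ha : (2 * a - a - b) / (b - a) = -1 := by field_simp; ring
  rw [hb, ha, arcsin_one, arcsin_neg_one]
  ring

theorem integral_unitInterval_eq_integral_div_sqrt (hab : a < b) (g : ℝ → ℝ) :
    ∫ u in (0 : ℝ)..1, g ((1 - u) * b + u * a) / √(u * (1 - u))
      = ∫ t in a..b, g t / √((t - a) * (b - t)) := by
  have hba : 0 < b - a := by linarith
  have hpoint : ∀ u : ℝ, g ((1 - u) * b + u * a) / √(u * (1 - u))
      = -((a - b) * (g (b + (a - b) * u) / √((b + (a - b) * u - a) * (b - (b + (a - b) * u))))) := by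
    intro u
    have hw : (b + (a - b) * u - a) * (b - (b + (a - b) * u)) = (b - a) ^ 2 * (u * (1 - u)) := by
      ring
    rw [hw, sqrt_mul (sq_nonneg _), sqrt_sq hba.le, show (1 - u) * b + u * a = b + (a - b) * u by ring]
    rcases eq_or_ne √(u * (1 - u)) 0 with h0 | h0
    · simp [h0]
    · field_simp
      ring
  simp_rw [hpoint, intervalIntegral.integral_neg, intervalIntegral.integral_const_mul]
  rw [← smul_eq_mul, intervalIntegral.smul_integral_comp_add_mul
    (fun t => g t / √((t - a) * (b - t))), intervalIntegral.integral_symm]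
  simp

theorem phi_eq_integral (Q : ℝ[X]) (hab : a < b) :
    phi Q a b = ∫ t in a..b, Q.derivative.eval t / √((t - a) * (b - t)) :=
  integral_unitInterval_eq_integral_div_sqrt hab fun t => Q.derivative.eval t

end ArcsineWeight

/-- For `v ≤ 0` both sides vanish, by the conventions `√y = 0` for `y ≤ 0` and `u / 0 = 0`. -/
theorem Real.sqrt_div_eq_div_sqrt_mul {u : ℝ} (hu : 0 ≤ u) (v : ℝ) : √(u / v) = u / √(u * v) := by
  rw [sqrt_mul hu, div_mul_eq_div_div, div_sqrt, sqrt_div hu]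

theorem pFun_eq (Q : ℝ[X]) {a b : ℝ} (hab : a < b) (x : ℝ) :
    pFun Q a b x = (phi Q a b + (x - a) * ∫ t in a..b, divDiff Q x t / √((t - a) * (b - t)))
      / (2 * π) := by
  have hpoint : ∀ t ∈ uIcc a b, divDiff Q x t * √((t - a) / (b - t))
      = Q.derivative.eval t / √((t - a) * (b - t))
        - Q.derivative.eval x * (√((t - a) * (b - t)))⁻¹
        + (x - a) * (divDiff Q x t / √((t - a) * (b - t))) := by
    intro t ht
    rw [uIcc_of_le hab.le] at ht
    have hsplit : divDiff Q x t * (t - a)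
        = Q.derivative.eval t - Q.derivative.eval x + (x - a) * divDiff Q x t := by
      linear_combination divDiff_mul_sub Q x t
    rw [sqrt_div_eq_div_sqrt_mul (sub_nonneg.mpr ht.1), mul_div_assoc', hsplit]
    ring
  have iQ := intervalIntegrable_div_sqrt_mul_sub hab.le Q.derivative.continuous.continuousOn
  have iD := intervalIntegrable_div_sqrt_mul_sub hab.le (continuous_divDiff Q x).continuousOn
  have iW := intervalIntegrable_inv_sqrt_mul_sub hab.le
  rw [pFun, intervalIntegral.integral_congr hpoint,
    intervalIntegral.integral_add (iQ.sub (iW.const_mul _)) (iD.const_mul _),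
    intervalIntegral.integral_sub iQ (iW.const_mul _), intervalIntegral.integral_const_mul,
    intervalIntegral.integral_const_mul, integral_inv_sqrt_mul_sub hab, ← phi_eq_integral Q hab]
  field_simp
  ring

theorem pFun_nonneg_general (Q : Polynomial ℝ)
    (hconv : ∀ x : ℝ, 0 ≤ Q.derivative.derivative.eval x)
    (a b : ℝ) (hab : a < b) (hphi : 0 ≤ phi Q a b) :
    ∀ x : ℝ, a ≤ x → 0 ≤ pFun Q a b x := by
  intro x hx
  have hK : 0 ≤ ∫ t in a..b, divDiff Q x t / √((t - a) * (b - t)) :=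
    intervalIntegral.integral_nonneg hab.le fun t _ =>
      div_nonneg (divDiff_nonneg x hconv t) (sqrt_nonneg _)
  rw [pFun_eq Q hab]
  exact div_nonneg (add_nonneg hphi (mul_nonneg (sub_nonneg.mpr hx) hK)) (by positivity)

/-- If `φ(a,b) ≥ 0`, then `p(x) ≥ 0` for every `x ≥ a`. -/
theorem pFun_nonneg (Q : Polynomial ℝ) (m : ℕ) (hm : 1 ≤ m)
    (hdeg : Q.natDegree = 2 * m) (hlead : 0 < Q.leadingCoeff)
    (hconv : ∀ x : ℝ, 0 ≤ Q.derivative.derivative.eval x)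
    (a b : ℝ) (hab : a < b) (hphi : 0 ≤ phi Q a b) :
    ∀ x : ℝ, a ≤ x → 0 ≤ pFun Q a b x :=
  pFun_nonneg_general Q hconv a b hab hphi
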